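/- arXiv:math/9411228 — 2 statements merged into one kernel-verified Lean document; each statement's English description precedes it below -/
import Mathlib

section
/- Let μ, ν, β, p be real numbers with μ > −1, ν > μ − 1, β > 0 and p > 0. Let G : (0,∞) → ℝ be measurable with Laplace transform F(x) = ∫₀^∞ e^{−x t} G(t) dt converging absolutely for every x ≥ p, and assume the function (y,t) ↦ y^μ ₁F₁(ν+1; μ+1; −β y) e^{−(y+p) t} G(t) is integrable on (0,∞) × (0,∞). Then ∫₀^∞ y^μ F(y+p) ₁F₁(ν+1; μ+1; −β y) dy = Γ(μ+1) ∫₀^∞ G(t) t^{ν−μ} e^{−p t} / (t+β)^{ν+1} dt. -/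
open MeasureTheory Set

/-- Pochhammer symbol `(c)_n = c(c+1)⋯(c+n−1)` for a real `c`. -/
noncomputable def poch (c : ℝ) (n : ℕ) : ℝ := ∏ i ∈ Finset.range n, (c + i)

/-- The confluent hypergeometric series `₁F₁(a;b;z)`. -/
noncomputable def hyp1F1 (a b z : ℝ) : ℝ :=
  ∑' n : ℕ, poch a n / poch b n * z ^ n / n.factorial

/-!
Kummer's transformation `₁F₁(a; b; z) = eᶻ ₁F₁(b - a; b; -z)`, whose coefficient identity is the
Chu–Vandermonde identity, turns the inner integral `∫₀^∞ y^μ ₁F₁(ν+1; μ+1; -βy) e^{-ty} dy` into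
`∫₀^∞ y^μ e^{-(t+β)y} ₁F₁(μ-ν; μ+1; βy) dy`. As `β/(t+β) < 1`, the latter may be integrated term by
term with Euler's Gamma integral, and the binomial series `∑ (c)ₙ xⁿ/n! = (1-x)^{-c}` sums the
result to `Γ(μ+1) t^{ν-μ} (t+β)^{-(ν+1)}`. Fubini's theorem then exchanges the two integrals.
-/

open Filter Topology Real

lemma poch_succ (c : ℝ) (n : ℕ) : poch c (n + 1) = poch c n * (c + n) :=
  Finset.prod_range_succ _ _

lemma poch_add (c : ℝ) (m n : ℕ) : poch c (m + n) = poch c m * poch (c + m) n := by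
  simp only [poch, Finset.prod_range_add, Nat.cast_add, add_assoc]

lemma poch_ne_zero {b : ℝ} (hb : ∀ k : ℕ, b + k ≠ 0) (n : ℕ) : poch b n ≠ 0 :=
  Finset.prod_ne_zero_iff.2 fun k _ => hb k

lemma ascPochhammer_eval_eq_poch (c : ℝ) (n : ℕ) : (ascPochhammer ℝ n).eval c = poch c n := by
  induction n with
  | zero => simp [poch]
  | succ n ih => rw [ascPochhammer_succ_eval, ih, poch_succ]

lemma Ring.choose_add_sub_one_eq_poch_div (c : ℝ) (n : ℕ) :
    Ring.choose (c + n - 1) n = poch c n / n.factorial := by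
  rw [← Ring.multichoose_eq, eq_div_iff (by positivity), mul_comm, ← nsmul_eq_mul,
    Ring.factorial_nsmul_multichoose_eq_ascPochhammer, Polynomial.ascPochhammer_smeval_eq_eval,
    ascPochhammer_eval_eq_poch]

lemma Ring.choose_neg_eq_poch_div (c : ℝ) (n : ℕ) :
    Ring.choose (-c) n = (-1) ^ n * poch c n / n.factorial := by
  rw [Ring.choose_neg, Ring.choose_add_sub_one_eq_poch_div, Units.smul_def, Int.negOnePow_def]
  simp [mul_div_assoc]

lemma Real.Gamma_add_nat_eq_mul_poch {c : ℝ} (hc : 0 < c) (n : ℕ) :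
    Gamma (c + n) = Gamma c * poch c n := by
  induction n with
  | zero => simp [poch]
  | succ n ih =>
    rw [Nat.cast_succ, ← add_assoc, Gamma_add_one (by positivity), ih, poch_succ]
    ring

section BinomialSeries

variable (c : ℝ)

lemma ofScalars_choose_add_sub_one_apply (x : ℝ) (n : ℕ) :
    (FormalMultilinearSeries.ofScalars ℝ fun n => Ring.choose (c + n - 1) n) n (fun _ => x)
      = poch c n * x ^ n / n.factorial := by
  rw [FormalMultilinearSeries.ofScalars_apply_eq, Ring.choose_add_sub_one_eq_poch_div, smul_eq_mul]
  ring

lemma mem_eball_zero_one_of_abs_lt_one {x : ℝ} (hx : |x| < 1) : x ∈ Metric.eball (0 : ℝ) 1 := by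
  rw [mem_eball_zero_iff, ← ofReal_norm, ENNReal.ofReal_lt_one]
  exact hx

lemma hasSum_poch_mul_pow_div_factorial {x : ℝ} (hx : |x| < 1) :
    HasSum (fun n => poch c n * x ^ n / n.factorial) ((1 - x) ^ (-c)) := by
  have h := (one_div_one_sub_rpow_hasFPowerSeriesOnBall_zero c).hasSum
    (mem_eball_zero_one_of_abs_lt_one hx)
  simp only [ofScalars_choose_add_sub_one_apply, zero_add, one_div] at h
  rwa [rpow_neg (by linarith [le_abs_self x])]

lemma summable_norm_poch_mul_pow_div_factorial {x : ℝ} (hx : |x| < 1) :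
    Summable fun n => ‖poch c n * x ^ n / n.factorial‖ := by
  have h := FormalMultilinearSeries.summable_norm_apply _
    (Metric.eball_subset_eball (one_div_one_sub_rpow_hasFPowerSeriesOnBall_zero c).r_le
      (mem_eball_zero_one_of_abs_lt_one hx))
  simpa only [ofScalars_choose_add_sub_one_apply] using h

end BinomialSeries

lemma summable_norm_of_succ_eq_mul {𝕜 : Type*} [NormedField 𝕜] {f r : ℕ → 𝕜}
    (hf : ∀ n, f (n + 1) = f n * r n) (hr : Tendsto r atTop (𝓝 0)) :
    Summable fun n => ‖f n‖ := by
  refine summable_of_ratio_norm_eventually_le (r := 1 / 2) (by norm_num) ?_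
  filter_upwards [(tendsto_zero_iff_norm_tendsto_zero.1 hr).eventually_le_const
    (by norm_num : (0 : ℝ) < 1 / 2)] with n hn
  rw [norm_norm, norm_norm, hf, norm_mul, mul_comm]
  exact mul_le_mul_of_nonneg_right hn (norm_nonneg _)

lemma hyp1F1_term_succ {b : ℝ} (hb : ∀ k : ℕ, b + k ≠ 0) (a z : ℝ) (n : ℕ) :
    poch a (n + 1) / poch b (n + 1) * z ^ (n + 1) / (n + 1).factorial
      = poch a n / poch b n * z ^ n / n.factorial * ((1 + (a - 1) / (n + 1)) * (z / (b + n))) := by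
  rw [poch_succ, poch_succ, Nat.factorial_succ, pow_succ]
  push_cast
  field_simp [poch_ne_zero hb n, hb n]
  ring

lemma summable_norm_hyp1F1_term {b : ℝ} (hb : ∀ k : ℕ, b + k ≠ 0) (a z : ℝ) :
    Summable fun n => ‖poch a n / poch b n * z ^ n / n.factorial‖ := by
  refine summable_norm_of_succ_eq_mul (hyp1F1_term_succ hb a z) ?_
  have h1 : Tendsto (fun n : ℕ => 1 + (a - 1) / ((n : ℝ) + 1)) atTop (𝓝 1) := by
    simpa using (tendsto_const_nhds.div_atTop
      (tendsto_atTop_add_const_right _ 1 tendsto_natCast_atTop_atTop)).const_add (1 : ℝ)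
  have h2 : Tendsto (fun n : ℕ => z / (b + n)) atTop (𝓝 0) :=
    tendsto_const_nhds.div_atTop (tendsto_atTop_add_const_left _ b tendsto_natCast_atTop_atTop)
  simpa using h1.mul h2

open Finset in
lemma sum_antidiagonal_exp_term_mul_hyp1F1_term {b : ℝ} (hb : ∀ k : ℕ, b + k ≠ 0)
    (a z : ℝ) (n : ℕ) :
    ∑ ij ∈ antidiagonal n, z ^ ij.1 / ij.1.factorial *
        (poch (b - a) ij.2 / poch b ij.2 * (-z) ^ ij.2 / ij.2.factorial)
      = poch a n / poch b n * z ^ n / n.factorial := by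
  -- With `(b)ₙ = (b)ⱼ (b + j)ᵢ`, `(b + j)ᵢ / i! = choose (b + n - 1) i` and
  -- `(-1)ʲ (b - a)ⱼ / j! = choose (a - b) j`, this is the Chu–Vandermonde identity.
  calc _ = ∑ ij ∈ antidiagonal n,
        z ^ n / poch b n * (Ring.choose (b + n - 1) ij.1 * Ring.choose (a - b) ij.2) := by
        refine sum_congr rfl fun ⟨i, j⟩ hij => ?_
        rw [HasAntidiagonal.mem_antidiagonal] at hij
        subst hij
        dsimp only
        rw [show b + ((i + j : ℕ) : ℝ) - 1 = b + j + i - 1 by push_cast; ring,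
          Ring.choose_add_sub_one_eq_poch_div, ← neg_sub b a, Ring.choose_neg_eq_poch_div,
          add_comm i j, poch_add, pow_add, neg_pow]
        have hbj : poch (b + j) i ≠ 0 :=
          poch_ne_zero (fun k => by simpa [add_assoc] using hb (j + k)) i
        field_simp [poch_ne_zero hb j, hbj]
    _ = z ^ n / poch b n * Ring.choose ((b + n - 1) + (a - b)) n := by
        rw [← mul_sum, Ring.add_choose_eq _ (Commute.all _ _)]
    _ = poch a n / poch b n * z ^ n / n.factorial := by
        rw [show b + n - 1 + (a - b) = a + n - 1 by ring, Ring.choose_add_sub_one_eq_poch_div]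
        ring

theorem hyp1F1_eq_exp_mul_hyp1F1 {b : ℝ} (hb : ∀ k : ℕ, b + k ≠ 0) (a z : ℝ) :
    hyp1F1 a b z = exp z * hyp1F1 (b - a) b (-z) := by
  rw [exp_eq_exp_ℝ, NormedSpace.exp_eq_tsum_div, hyp1F1, hyp1F1,
    tsum_mul_tsum_eq_tsum_sum_antidiagonal_of_summable_norm
      (NormedSpace.norm_expSeries_div_summable z) (summable_norm_hyp1F1_term hb _ _)]
  simp_rw [sum_antidiagonal_exp_term_mul_hyp1F1_term hb]

lemma integral_norm_const_mul_of_ae_nonneg {α : Type*} [MeasurableSpace α] {ν : Measure α}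
    {g : α → ℝ} (hg : 0 ≤ᵐ[ν] g) (A : ℝ) :
    ∫ x, ‖A * g x‖ ∂ν = ‖∫ x, A * g x ∂ν‖ := by
  rw [integral_const_mul, norm_mul, norm_of_nonneg (integral_nonneg_of_ae hg)]
  simp_rw [norm_mul, integral_const_mul]
  exact congrArg _ (integral_congr_ae (hg.mono fun x hx => norm_of_nonneg hx))

section LaplaceTransform

variable {μ s : ℝ}

lemma integral_rpow_mul_exp_neg_mul (hμ : -1 < μ) (hs : 0 < s) :
    ∫ y in Ioi (0 : ℝ), y ^ μ * exp (-(s * y)) = Gamma (μ + 1) * s ^ (-(μ + 1)) := by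
  have h := integral_rpow_mul_exp_neg_mul_Ioi (by linarith : 0 < μ + 1) hs
  rwa [add_sub_cancel_right, one_div, inv_rpow hs.le, ← rpow_neg hs.le, mul_comm] at h

lemma integrableOn_rpow_mul_exp_neg_mul (hμ : -1 < μ) (hs : 0 < s) :
    IntegrableOn (fun y : ℝ => y ^ μ * exp (-(s * y))) (Ioi 0) := by
  simpa using integrableOn_rpow_mul_exp_neg_mul_rpow hμ zero_lt_one hs

lemma integral_rpow_add_nat_mul_exp_neg_mul (hμ : -1 < μ) (hs : 0 < s) (n : ℕ) :
    ∫ y in Ioi (0 : ℝ), y ^ (μ + n) * exp (-(s * y))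
      = Gamma (μ + 1) * s ^ (-(μ + 1)) * (poch (μ + 1) n / s ^ n) := by
  rw [integral_rpow_mul_exp_neg_mul (by linarith [n.cast_nonneg (α := ℝ)]) hs,
    add_right_comm, Gamma_add_nat_eq_mul_poch (by linarith), neg_add, rpow_add hs,
    rpow_neg hs.le n, rpow_natCast]
  ring

theorem integral_rpow_mul_exp_mul_hyp1F1 (hμ : -1 < μ) {β : ℝ} (hβs : |β| < s) (c : ℝ) :
    ∫ y in Ioi (0 : ℝ), y ^ μ * exp (-(s * y)) * hyp1F1 c (μ + 1) (β * y)
      = Gamma (μ + 1) * s ^ (-(μ + 1)) * (1 - β / s) ^ (-c) := by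
  have hs : 0 < s := (abs_nonneg β).trans_lt hβs
  have hx : |β / s| < 1 := by rwa [abs_div, abs_of_pos hs, div_lt_one hs]
  have hpoch : ∀ n, poch (μ + 1) n ≠ 0 :=
    poch_ne_zero fun k => by linarith [k.cast_nonneg (α := ℝ)]
  set f : ℕ → ℝ → ℝ := fun n y =>
    poch c n / poch (μ + 1) n * β ^ n / n.factorial * (y ^ (μ + n) * exp (-(s * y)))
  have hf_int : ∀ n, Integrable (f n) (volume.restrict (Ioi 0)) := fun n =>
    (integrableOn_rpow_mul_exp_neg_mul (by linarith [n.cast_nonneg (α := ℝ)]) hs).const_mul _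
  have hf_integral : ∀ n, ∫ y in Ioi (0 : ℝ), f n y
      = Gamma (μ + 1) * s ^ (-(μ + 1)) * (poch c n * (β / s) ^ n / n.factorial) := fun n => by
    rw [integral_const_mul, integral_rpow_add_nat_mul_exp_neg_mul hμ hs, div_pow]
    field_simp [hpoch n]
  have hf_norm : ∀ n, ∫ y in Ioi (0 : ℝ), ‖f n y‖ = ‖∫ y in Ioi (0 : ℝ), f n y‖ := fun n =>
    integral_norm_const_mul_of_ae_nonneg ((ae_restrict_iff' measurableSet_Ioi).2 <|
      .of_forall fun y (hy : 0 < y) => by positivity) _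
  have hsum : HasSum (fun n => ∫ y in Ioi (0 : ℝ), f n y)
      (∫ y in Ioi (0 : ℝ), ∑' n, f n y) := by
    refine hasSum_integral_of_summable_integral_norm hf_int ?_
    simp_rw [hf_norm, hf_integral, norm_mul]
    exact (summable_norm_poch_mul_pow_div_factorial c hx).mul_left _
  have htsum : ∀ y ∈ Ioi (0 : ℝ), ∑' n, f n y
      = y ^ μ * exp (-(s * y)) * hyp1F1 c (μ + 1) (β * y) := fun y hy => by
    have : 0 < y := hy
    rw [hyp1F1, ← tsum_mul_left]
    refine tsum_congr fun n => ?_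
    simp only [f, rpow_add this, rpow_natCast, mul_pow]
    ring
  rw [← setIntegral_congr_fun measurableSet_Ioi htsum]
  refine hsum.unique ?_
  simp_rw [hf_integral]
  exact (hasSum_poch_mul_pow_div_factorial c hx).mul_left _

end LaplaceTransform

theorem integral_rpow_mul_hyp1F1_neg_mul_exp {μ β t : ℝ} (hμ : -1 < μ) (hβ : 0 < β) (ht : 0 < t)
    (a : ℝ) :
    ∫ y in Ioi (0 : ℝ), y ^ μ * hyp1F1 a (μ + 1) (-(β * y)) * exp (-(y * t))
      = Gamma (μ + 1) * t ^ (a - (μ + 1)) / (t + β) ^ a := by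
  have htβ : 0 < t + β := by linarith
  have hkummer : ∀ y, y ^ μ * hyp1F1 a (μ + 1) (-(β * y)) * exp (-(y * t))
      = y ^ μ * exp (-((t + β) * y)) * hyp1F1 (μ + 1 - a) (μ + 1) (β * y) := fun y => by
    rw [hyp1F1_eq_exp_mul_hyp1F1 (fun k => by linarith [k.cast_nonneg (α := ℝ)]), neg_neg,
      show -((t + β) * y) = -(β * y) + -(y * t) by ring, exp_add]
    ring
  have hbase : 1 - β / (t + β) = t / (t + β) := by field_simp; ring
  have hsplit : (t + β) ^ a = (t + β) ^ (μ + 1) * (t + β) ^ (a - (μ + 1)) := by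
    rw [← rpow_add htβ, add_sub_cancel]
  simp_rw [hkummer]
  rw [integral_rpow_mul_exp_mul_hyp1F1 hμ (by rwa [abs_of_pos hβ, lt_add_iff_pos_left]), hbase,
    div_rpow ht.le htβ.le, show -(μ + 1 - a) = a - (μ + 1) by ring, rpow_neg htβ.le, hsplit]
  field_simp

theorem integral_rpow_laplace_hyp1F1_general (μ ν β p : ℝ) (hμ : -1 < μ)
    (hβ : 0 < β) (G F : ℝ → ℝ)
    (hF : ∀ x, p ≤ x → F x = ∫ t in Ioi (0:ℝ), Real.exp (-(x * t)) * G t)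
    (hprod : Integrable
      (fun q : ℝ × ℝ =>
        q.1 ^ μ * hyp1F1 (ν + 1) (μ + 1) (-(β * q.1)) *
          (Real.exp (-((q.1 + p) * q.2)) * G q.2))
      ((volume.restrict (Ioi (0:ℝ))).prod (volume.restrict (Ioi (0:ℝ))))) :
    ∫ y in Ioi (0:ℝ), y ^ μ * F (y + p) * hyp1F1 (ν + 1) (μ + 1) (-(β * y))
      = Real.Gamma (μ + 1) *
          ∫ t in Ioi (0:ℝ), G t * t ^ (ν - μ) * Real.exp (-(p * t)) / (t + β) ^ (ν + 1) := by
  have hinner : ∀ t ∈ Ioi (0 : ℝ),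
      ∫ y in Ioi (0 : ℝ), y ^ μ * hyp1F1 (ν + 1) (μ + 1) (-(β * y)) * (exp (-((y + p) * t)) * G t)
        = Gamma (μ + 1) * (G t * t ^ (ν - μ) * exp (-(p * t)) / (t + β) ^ (ν + 1)) :=
    fun t ht => by
      simp_rw [add_mul, neg_add, exp_add, ← mul_assoc]
      rw [integral_mul_const, integral_mul_const, integral_rpow_mul_hyp1F1_neg_mul_exp hμ hβ ht,
        show ν + 1 - (μ + 1) = ν - μ by ring]
      ring
  calc ∫ y in Ioi (0 : ℝ), y ^ μ * F (y + p) * hyp1F1 (ν + 1) (μ + 1) (-(β * y))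
      = ∫ y in Ioi (0 : ℝ), ∫ t in Ioi (0 : ℝ),
          y ^ μ * hyp1F1 (ν + 1) (μ + 1) (-(β * y)) * (exp (-((y + p) * t)) * G t) :=
        setIntegral_congr_fun measurableSet_Ioi fun y (hy : 0 < y) => by
          rw [hF _ (by linarith), mul_right_comm, ← integral_const_mul]
    _ = ∫ t in Ioi (0 : ℝ), ∫ y in Ioi (0 : ℝ),
          y ^ μ * hyp1F1 (ν + 1) (μ + 1) (-(β * y)) * (exp (-((y + p) * t)) * G t) :=
        integral_integral_swap hprod
    _ = _ := by rw [setIntegral_congr_fun measurableSet_Ioi hinner, integral_const_mul]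

/-- If `F` is the Laplace transform of `G` (converging absolutely for all `x ≥ p`), with
`μ > −1`, `ν > μ − 1`, `β > 0`, `p > 0`, and the indicated joint integrability, then
`∫₀^∞ y^μ F(y+p) ₁F₁(ν+1;μ+1;−βy) dy = Γ(μ+1) ∫₀^∞ G(t) t^{ν−μ} e^{−p t}/(t+β)^{ν+1} dt`. -/
theorem integral_rpow_laplace_hyp1F1 (μ ν β p : ℝ) (hμ : -1 < μ) (hν : μ - 1 < ν)
    (hβ : 0 < β) (hp : 0 < p) (G F : ℝ → ℝ) (hG : Measurable G)
    (hFconv : ∀ x, p ≤ x → IntegrableOn (fun t => Real.exp (-(x * t)) * G t) (Ioi 0))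
    (hF : ∀ x, p ≤ x → F x = ∫ t in Ioi (0:ℝ), Real.exp (-(x * t)) * G t)
    (hprod : Integrable
      (fun q : ℝ × ℝ =>
        q.1 ^ μ * hyp1F1 (ν + 1) (μ + 1) (-(β * q.1)) *
          (Real.exp (-((q.1 + p) * q.2)) * G q.2))
      ((volume.restrict (Ioi (0:ℝ))).prod (volume.restrict (Ioi (0:ℝ))))) :
    ∫ y in Ioi (0:ℝ), y ^ μ * F (y + p) * hyp1F1 (ν + 1) (μ + 1) (-(β * y))
      = Real.Gamma (μ + 1) *
          ∫ t in Ioi (0:ℝ), G t * t ^ (ν - μ) * Real.exp (-(p * t)) / (t + β) ^ (ν + 1) :=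
  integral_rpow_laplace_hyp1F1_general μ ν β p hμ hβ G F hF hprod
end

section
/- Let μ, ν, p, a, β be real numbers with μ < 1, μ + ν > 1, and p + a > 0. Then ∫_p^∞ (x+a)^{−ν} (x−p)^{−μ} · exp(β/(x+a)) dx = (Γ(1−μ) Γ(μ+ν−1) / ((p+a)^{μ+ν−1} Γ(ν))) · ₁F₁(μ+ν−1; ν; β/(p+a)). -/
open MeasureTheory Set

/-! The substitution `x = (p + a) / t - a` maps `(0, 1)` onto `(p, ∞)` and turns the integral
into `(p + a) ^ (1 - μ - ν) ∫₀¹ t ^ (u - 1) (1 - t) ^ (v - 1) e ^ (z t) dt`, where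
`u = μ + ν - 1`, `v = 1 - μ`, `z = β / (p + a)`. Expanding `e ^ (z t)` and integrating termwise
(the terms are dominated by `t ^ (u - 1) (1 - t) ^ (v - 1) |z| ^ n / n!`) gives the Beta integrals
`B(u + n, v) = B(u, v) (u)ₙ / (u + v)ₙ`, i.e. Euler's integral for `₁F₁(u; u + v; z)`. -/

lemma poch_pos {c : ℝ} (hc : 0 < c) (n : ℕ) : 0 < poch c n :=
  Finset.prod_pos fun i _ => by positivity

lemma Gamma_add_nat_eq_poch_mul {c : ℝ} (hc : 0 < c) (n : ℕ) :
    Real.Gamma (c + n) = poch c n * Real.Gamma c := by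
  induction n with
  | zero => simp [poch]
  | succ n ih =>
    rw [Nat.cast_succ, ← add_assoc, Real.Gamma_add_one (by positivity), ih, poch, poch,
      Finset.prod_range_succ]
    ring

section Beta

variable {u v : ℝ}

lemma cpow_mul_one_sub_cpow_eq_ofReal {t : ℝ} (ht : t ∈ Icc (0 : ℝ) 1) (u v : ℝ) :
    ((t : ℂ) ^ ((u : ℂ) - 1) * (1 - (t : ℂ)) ^ ((v : ℂ) - 1))
      = ((t ^ (u - 1) * (1 - t) ^ (v - 1) : ℝ) : ℂ) := by
  rw [Complex.ofReal_mul, Complex.ofReal_cpow ht.1, Complex.ofReal_cpow (sub_nonneg.2 ht.2)]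
  push_cast
  rfl

lemma integrableOn_rpow_mul_one_sub_rpow (hu : 0 < u) (hv : 0 < v) :
    IntegrableOn (fun t : ℝ => t ^ (u - 1) * (1 - t) ^ (v - 1)) (Ioo 0 1) := by
  have h := Complex.betaIntegral_convergent (u := u) (v := v) (by simpa) (by simpa)
  rw [intervalIntegrable_iff_integrableOn_Ioo_of_le zero_le_one] at h
  have h_re := (h.congr_fun
    (fun t ht => cpow_mul_one_sub_cpow_eq_ofReal (Ioo_subset_Icc_self ht) u v) measurableSet_Ioo).re
  simp only [RCLike.re_to_complex, Complex.ofReal_re] at h_re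
  exact h_re

lemma betaIntegral_ofReal (u v : ℝ) :
    Complex.betaIntegral u v
      = ((∫ t in Ioo (0 : ℝ) 1, t ^ (u - 1) * (1 - t) ^ (v - 1) : ℝ) : ℂ) := by
  rw [Complex.betaIntegral, intervalIntegral.integral_congr fun t ht =>
      cpow_mul_one_sub_cpow_eq_ofReal (by rwa [uIcc_of_le zero_le_one] at ht) u v,
    intervalIntegral.integral_ofReal, intervalIntegral.integral_of_le zero_le_one,
    integral_Ioc_eq_integral_Ioo]

lemma integral_Ioo_rpow_mul_one_sub_rpow (hu : 0 < u) (hv : 0 < v) :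
    ∫ t in Ioo (0 : ℝ) 1, t ^ (u - 1) * (1 - t) ^ (v - 1)
      = Real.Gamma u * Real.Gamma v / Real.Gamma (u + v) := by
  have h := Complex.Gamma_mul_Gamma_eq_betaIntegral (s := u) (t := v) (by simpa) (by simpa)
  rw [betaIntegral_ofReal, ← Complex.ofReal_add, Complex.Gamma_ofReal, Complex.Gamma_ofReal,
    Complex.Gamma_ofReal, ← Complex.ofReal_mul, ← Complex.ofReal_mul, Complex.ofReal_inj] at h
  rw [h, mul_div_cancel_left₀ _ (Real.Gamma_pos_of_pos (add_pos hu hv)).ne']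

lemma integral_Ioo_rpow_mul_one_sub_rpow_mul_pow (hu : 0 < u) (hv : 0 < v) (n : ℕ) :
    ∫ t in Ioo (0 : ℝ) 1, t ^ (u - 1) * (1 - t) ^ (v - 1) * t ^ n
      = Real.Gamma u * Real.Gamma v / Real.Gamma (u + v) * (poch u n / poch (u + v) n) := by
  have hshift : ∀ t ∈ Ioo (0 : ℝ) 1, t ^ (u - 1) * (1 - t) ^ (v - 1) * t ^ n
      = t ^ (u + n - 1) * (1 - t) ^ (v - 1) := fun t ht => by
    rw [← Real.rpow_natCast, add_sub_right_comm, Real.rpow_add ht.1]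
    ring
  rw [setIntegral_congr_fun measurableSet_Ioo hshift,
    integral_Ioo_rpow_mul_one_sub_rpow (by positivity) hv,
    add_right_comm, Gamma_add_nat_eq_poch_mul hu, Gamma_add_nat_eq_poch_mul (add_pos hu hv)]
  have := (poch_pos (add_pos hu hv) n).ne'
  have := (Real.Gamma_pos_of_pos (add_pos hu hv)).ne'
  field_simp

end Beta

lemma hasSum_integral_mul_exp {s : Set ℝ} (hs : MeasurableSet s) (hs1 : s ⊆ Icc (-1) 1)
    {g : ℝ → ℝ} (hg : IntegrableOn g s) (z : ℝ) :
    HasSum (fun n : ℕ => ∫ t in s, g t * ((z * t) ^ n / n.factorial))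
      (∫ t in s, g t * Real.exp (z * t)) := by
  have hexp (x : ℝ) : HasSum (fun n : ℕ => x ^ n / n.factorial) (Real.exp x) :=
    Real.exp_eq_exp_ℝ ▸ NormedSpace.expSeries_div_hasSum_exp x
  refine hasSum_integral_of_dominated_convergence (fun n t => ‖g t‖ * (|z| ^ n / n.factorial))
    (fun n => hg.aestronglyMeasurable.mul (by fun_prop : Continuous _).aestronglyMeasurable)
    (fun n => ae_restrict_of_forall_mem hs fun t ht => ?_)
    (ae_of_all _ fun t => ((hexp |z|).mul_left _).summable) ?_
    (ae_of_all _ fun t => (hexp (z * t)).mul_left (g t))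
  · simp only [norm_mul, norm_div, norm_pow, Real.norm_eq_abs, Nat.abs_cast]
    gcongr
    exact mul_le_of_le_one_right (abs_nonneg z) (abs_le.2 (hs1 ht))
  · simp_rw [((hexp |z|).mul_left _).tsum_eq]
    exact hg.norm.mul_const _

lemma integral_Ioo_rpow_mul_one_sub_rpow_mul_exp {u v : ℝ} (hu : 0 < u) (hv : 0 < v) (z : ℝ) :
    ∫ t in Ioo (0 : ℝ) 1, t ^ (u - 1) * (1 - t) ^ (v - 1) * Real.exp (z * t)
      = Real.Gamma u * Real.Gamma v / Real.Gamma (u + v) * hyp1F1 u (u + v) z := by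
  have hterm (n : ℕ) :
      ∫ t in Ioo (0 : ℝ) 1, t ^ (u - 1) * (1 - t) ^ (v - 1) * ((z * t) ^ n / n.factorial)
      = Real.Gamma u * Real.Gamma v / Real.Gamma (u + v)
        * (poch u n / poch (u + v) n * z ^ n / n.factorial) := by
    calc _ = ∫ t in Ioo (0 : ℝ) 1,
            z ^ n / n.factorial * (t ^ (u - 1) * (1 - t) ^ (v - 1) * t ^ n) := by
          congr 1; funext t; ring
      _ = _ := by rw [integral_const_mul, integral_Ioo_rpow_mul_one_sub_rpow_mul_pow hu hv]; ring
  rw [← (hasSum_integral_mul_exp measurableSet_Ioo (Ioo_subset_Icc_self.trans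
    (Icc_subset_Icc (by norm_num) le_rfl)) (integrableOn_rpow_mul_one_sub_rpow hu hv) z).tsum_eq,
    tsum_congr hterm, hyp1F1, tsum_mul_left]

lemma integral_Ioi_eq_integral_Ioo_div_sub {E : Type*} [NormedAddCommGroup E] [NormedSpace ℝ E]
    {p a : ℝ} (hpa : 0 < p + a) (g : ℝ → E) :
    ∫ x in Ioi p, g x = ∫ t in Ioo (0 : ℝ) 1, ((p + a) / t ^ 2) • g ((p + a) / t - a) := by
  set c := p + a
  have himage : (fun t => c / t - a) '' Ioo 0 1 = Ioi p := by
    ext x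
    constructor
    · rintro ⟨t, ⟨ht0, ht1⟩, rfl⟩
      have : c < c / t := (lt_div_iff₀ ht0).2 (by nlinarith)
      simp only [mem_Ioi]
      linarith
    · intro hx
      have hxa : 0 < x + a := by rw [mem_Ioi] at hx; linarith
      refine ⟨c / (x + a), ⟨by positivity, (div_lt_one hxa).2 (by linarith [mem_Ioi.1 hx])⟩,
        ?_⟩
      field_simp
      ring
  have hderiv : ∀ t ∈ Ioo (0 : ℝ) 1,
      HasDerivWithinAt (fun t => c / t - a) (-(c / t ^ 2)) (Ioo 0 1) t := fun t ht => by
    simpa [div_eq_mul_inv] using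
      (((hasDerivAt_inv ht.1.ne').const_mul c).sub_const a).hasDerivWithinAt
  have hinj : InjOn (fun t => c / t - a) (Ioo 0 1) := fun _ _ _ _ h =>
    inv_injective (mul_left_cancel₀ hpa.ne' (sub_left_inj.1 h))
  rw [← himage, integral_image_eq_integral_abs_deriv_smul measurableSet_Ioo hderiv hinj]
  refine setIntegral_congr_fun measurableSet_Ioo fun t ht => ?_
  rw [abs_neg, abs_of_pos (by have := ht.1; positivity)]

lemma jacobian_mul_integrand_comp_div {c t : ℝ} (hc : 0 < c) (ht : t ∈ Ioo (0 : ℝ) 1)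
    (μ ν β : ℝ) :
    c / t ^ 2 * ((c / t) ^ (-ν) * (c / t - c) ^ (-μ) * Real.exp (β / (c / t)))
      = c ^ (1 - μ - ν) * (t ^ (μ + ν - 2) * (1 - t) ^ (-μ) * Real.exp (β / c * t)) := by
  obtain ⟨ht0, ht1⟩ := ht
  have hct : c / t - c = c * (1 - t) / t := by field_simp
  have hc_rpow : c ^ (1 - μ - ν) = c * c ^ (-μ) * c ^ (-ν) := by
    rw [sub_sub, sub_eq_add_neg, neg_add, ← add_assoc, Real.rpow_add hc, Real.rpow_add hc,
      Real.rpow_one]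
  have ht_rpow : t ^ (μ + ν - 2) = t ^ μ * t ^ ν / t ^ 2 := by
    rw [Real.rpow_sub ht0, Real.rpow_add ht0, Real.rpow_two]
  rw [hct, Real.div_rpow hc.le ht0.le, Real.div_rpow (by nlinarith) ht0.le,
    Real.mul_rpow hc.le (by linarith), hc_rpow, ht_rpow, Real.rpow_neg ht0.le μ,
    Real.rpow_neg ht0.le ν, div_div_eq_mul_div]
  field_simp

/-- For `μ < 1`, `μ + ν > 1`, `p + a > 0`:
`∫_p^∞ (x+a)^{−ν}(x−p)^{−μ} e^{β/(x+a)} dx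
  = (Γ(1−μ)Γ(μ+ν−1)/((p+a)^{μ+ν−1}Γ(ν))) ₁F₁(μ+ν−1;ν;β/(p+a))`. -/
theorem fractional_integral_exp_hyp1F1 (μ ν p a β : ℝ) (hμ : μ < 1) (hμν : 1 < μ + ν)
    (hpa : 0 < p + a) :
    ∫ x in Ioi p, (x + a) ^ (-ν) * (x - p) ^ (-μ) * Real.exp (β / (x + a))
      = Real.Gamma (1 - μ) * Real.Gamma (μ + ν - 1) /
          ((p + a) ^ (μ + ν - 1) * Real.Gamma ν) *
          hyp1F1 (μ + ν - 1) ν (β / (p + a)) := by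
  have hu : 0 < μ + ν - 1 := by linarith
  have hv : 0 < 1 - μ := by linarith
  calc _ = ∫ t in Ioo (0 : ℝ) 1, (p + a) ^ (1 - μ - ν) *
          (t ^ (μ + ν - 2) * (1 - t) ^ (-μ) * Real.exp (β / (p + a) * t)) := by
        rw [integral_Ioi_eq_integral_Ioo_div_sub hpa]
        refine setIntegral_congr_fun measurableSet_Ioo fun t ht => ?_
        rw [smul_eq_mul, sub_add_cancel, show (p + a) / t - a - p = (p + a) / t - (p + a) by ring,
          jacobian_mul_integrand_comp_div hpa ht]
    _ = (p + a) ^ (1 - μ - ν) * (Real.Gamma (μ + ν - 1) * Real.Gamma (1 - μ) /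
          Real.Gamma ν * hyp1F1 (μ + ν - 1) ν (β / (p + a))) := by
        rw [integral_const_mul, show μ + ν - 2 = μ + ν - 1 - 1 by ring,
          show -μ = 1 - μ - 1 by ring, integral_Ioo_rpow_mul_one_sub_rpow_mul_exp hu hv,
          show μ + ν - 1 + (1 - μ) = ν by ring]
    _ = _ := by
        rw [show 1 - μ - ν = -(μ + ν - 1) by ring, Real.rpow_neg hpa.le]
        ring
end
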